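/- Let q ≥ 3 be an integer and Γ_q the Hecke triangle group in SL(2,ℝ). Let x, y ∈ ℝ ∪ {∞} be distinct points neither of which is cuspidal, i.e. x ∉ Γ_q • ∞ and y ∉ Γ_q • ∞. Then there exists g ∈ Γ_q such that g⁻¹ • x and g⁻¹ • y are real numbers with g⁻¹ • x > 0 > g⁻¹ • y. Moreover, if x is a positive real number, then g can be chosen so that additionally g • 0 is a nonnegative real number. -/

import Mathlib

noncomputable section

open OnePoint

abbrev SL2 := Matrix.SpecialLinearGroup (Fin 2) ℝ

/-- `S = [[0,1],[−1,0]] ∈ SL(2,ℝ)`. -/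
def Smat : SL2 := ⟨!![0, 1; -1, 0], by norm_num [Matrix.det_fin_two_of]⟩

/-- `T_q = [[1, λ_q],[0,1]] ∈ SL(2,ℝ)` where `λ_q = 2cos(π/q)`. -/
def Tmat (q : ℕ) : SL2 :=
  ⟨!![1, 2 * Real.cos (Real.pi / q); 0, 1], by norm_num [Matrix.det_fin_two_of]⟩

/-- The Hecke triangle group `Γ_q ≤ SL(2,ℝ)`, generated by `S` and `T_q`. -/
def Hecke (q : ℕ) : Subgroup SL2 := Subgroup.closure {Smat, Tmat q}

/-- The Möbius action of `SL(2,ℝ)` on `ℝ ∪ {∞}`: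
`[[a,b],[c,d]] • x = (ax+b)/(cx+d)` for `x ∈ ℝ` with `cx+d ≠ 0`, `= ∞` if `cx+d = 0`;
`[[a,b],[c,d]] • ∞ = a/c` if `c ≠ 0` and `= ∞` if `c = 0`. -/
def mob (g : SL2) (x : OnePoint ℝ) : OnePoint ℝ :=
  match x with
  | OnePoint.some r =>
      if g.1 1 0 * r + g.1 1 1 = 0 then ∞
      else (((g.1 0 0 * r + g.1 0 1) / (g.1 1 0 * r + g.1 1 1) : ℝ) : OnePoint ℝ)
  | OnePoint.infty =>
      if g.1 1 0 = 0 then ∞ else ((g.1 0 0 / g.1 1 0 : ℝ) : OnePoint ℝ)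

/-! A positive non-cuspidal `x` can be written `x = h • u` with `u > 0` non-cuspidal and
`h = [[a, b], [c, d]] = T_q^m N_j ∈ Γ_q`, where `b ≥ 0` and `a, c, d ≥ 1`: the shift `T_q^m`
moves `x` into `(0, λ_q)`, and the images of `(0, ∞)` under `N_j = (S²T_qS)^j T_q`, whose entries
are ratios of the numbers `sin (kπ/q)`, tile `(0, λ_q)` up to cusps. Iterating gives `g ∈ Γ_q`
with nonnegative entries, `g⁻¹ • x > 0`, `c ≥ n` and `d ≥ 1`. Then `g • (0, ∞) = (b/d, a/c)` is
an interval of length `1/(cd) ≤ 1/n` containing `x`, so `g⁻¹ • y < 0` once `|x - y| > 1/n`, and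
`g • 0 = b/d ≥ 0`. Negative `x` are first made positive by `S`. -/

open Real Matrix.SpecialLinearGroup

lemma SL2.det_eq (g : SL2) : g.1 0 0 * g.1 1 1 - g.1 0 1 * g.1 1 0 = 1 := by
  have := g.2
  rwa [Matrix.det_fin_two] at this

lemma SL2.mul_apply (g h : SL2) (i j : Fin 2) :
    (g * h).1 i j = g.1 i 0 * h.1 0 j + g.1 i 1 * h.1 1 j := by
  simp [coe_mul, Matrix.mul_apply, Fin.sum_univ_two]

lemma mob_eq_smul (g : SL2) (x : OnePoint ℝ) : mob g x = toGL g • x := by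
  cases x with
  | infty => simp only [mob, smul_infty_eq_ite, coe_GL_coe_matrix]; congr
  | coe r => simp only [mob, smul_some_eq_ite, coe_GL_coe_matrix]; congr

lemma mob_mul (g h : SL2) (x : OnePoint ℝ) : mob (g * h) x = mob g (mob h x) := by
  simp only [mob_eq_smul, map_mul, mul_smul]

lemma mob_one (x : OnePoint ℝ) : mob 1 x = x := by
  simp only [mob_eq_smul, map_one, one_smul]

lemma mob_inv_eq_iff (g : SL2) (x y : OnePoint ℝ) : mob g⁻¹ x = y ↔ mob g y = x := by
  rw [mob_eq_smul, mob_eq_smul, map_inv, inv_smul_eq_iff, eq_comm]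

lemma mob_coe_of_ne (g : SL2) {r : ℝ} (h : g.1 1 0 * r + g.1 1 1 ≠ 0) :
    mob g r = ((g.1 0 0 * r + g.1 0 1) / (g.1 1 0 * r + g.1 1 1) : ℝ) :=
  if_neg h

lemma mob_inv_coe_of_ne (g : SL2) {r : ℝ} (h : g.1 0 0 - g.1 1 0 * r ≠ 0) :
    mob g⁻¹ r = ((g.1 1 1 * r - g.1 0 1) / (g.1 0 0 - g.1 1 0 * r) : ℝ) := by
  have hinv : g⁻¹.1 = !![g.1 1 1, -g.1 0 1; -g.1 1 0, g.1 0 0] := by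
    rw [coe_inv, Matrix.adjugate_fin_two]
  have hden : g⁻¹.1 1 0 * r + g⁻¹.1 1 1 = g.1 0 0 - g.1 1 0 * r := by
    rw [hinv]
    change -g.1 1 0 * r + g.1 0 0 = _
    ring
  rw [mob_coe_of_ne _ (hden ▸ h), hden, hinv]
  change (((g.1 1 1 * r + -g.1 0 1) / _ : ℝ) : OnePoint ℝ) = _
  rw [← sub_eq_add_neg]

lemma mob_infty_of_ne (g : SL2) (h : g.1 1 0 ≠ 0) : mob g ∞ = (g.1 0 0 / g.1 1 0 : ℝ) :=
  if_neg h

lemma exists_pos_mob_inv_eq (g : SL2) {r : ℝ} (h₁ : 0 < g.1 1 1 * r - g.1 0 1)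
    (h₂ : 0 < g.1 0 0 - g.1 1 0 * r) : ∃ u : ℝ, 0 < u ∧ mob g⁻¹ r = u :=
  ⟨_, div_pos h₁ h₂, mob_inv_coe_of_ne g h₂.ne'⟩

lemma Smat_mem_hecke (q : ℕ) : Smat ∈ Hecke q := Subgroup.subset_closure (by simp)

lemma Tmat_mem_hecke (q : ℕ) : Tmat q ∈ Hecke q := Subgroup.subset_closure (by simp)

lemma mob_Smat_inv_coe {r : ℝ} (hr : r ≠ 0) : mob Smat⁻¹ r = (-1 / r : ℝ) := by
  rw [mob_inv_coe_of_ne _ (by simpa [Smat] using hr)]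
  simp [Smat]

lemma coe_Tmat_pow (q m : ℕ) :
    (Tmat q ^ m).1 = !![1, m * (2 * cos (π / q)); 0, 1] := by
  induction m with
  | zero => simp [Matrix.one_fin_two]
  | succ n ih =>
    rw [pow_succ, coe_mul, ih, Tmat, Matrix.mul_fin_two]
    push_cast
    ring_nf

lemma coe_Tmat_pow_mul (q m : ℕ) (g : SL2) :
    (Tmat q ^ m * g).1 = !![g.1 0 0 + m * (2 * cos (π / q)) * g.1 1 0,
      g.1 0 1 + m * (2 * cos (π / q)) * g.1 1 1; g.1 1 0, g.1 1 1] := by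
  rw [coe_mul, coe_Tmat_pow]
  ext i j
  fin_cases i <;> fin_cases j <;> simp [Matrix.mul_apply]

lemma mob_Tmat_pow_inv_coe (q m : ℕ) (r : ℝ) :
    mob (Tmat q ^ m)⁻¹ r = (r - m * (2 * cos (π / q)) : ℝ) := by
  rw [mob_inv_coe_of_ne _ (by rw [coe_Tmat_pow]; simp), coe_Tmat_pow]
  simp

def Umat (q : ℕ) : SL2 := Smat * Smat * Tmat q * Smat

def Nmat (q j : ℕ) : SL2 := Umat q ^ j * Tmat q

lemma Nmat_mem_hecke (q j : ℕ) : Nmat q j ∈ Hecke q := by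
  have hS := Smat_mem_hecke q
  have hT := Tmat_mem_hecke q
  exact mul_mem (pow_mem (mul_mem (mul_mem (mul_mem hS hS) hT) hS) j) hT

lemma coe_Umat (q : ℕ) : (Umat q).1 = !![2 * cos (π / q), -1; 1, 0] := by
  rw [Umat, coe_mul, coe_mul, coe_mul]
  norm_num [Smat, Tmat, Matrix.mul_fin_two]

def IsCuspidal (q : ℕ) (z : OnePoint ℝ) : Prop := ∃ g ∈ Hecke q, mob g ∞ = z

section Cusps

variable {q : ℕ}

lemma isCuspidal_infty : IsCuspidal q ∞ := ⟨1, one_mem _, mob_one ∞⟩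

lemma IsCuspidal.mob {g : SL2} (hg : g ∈ Hecke q) {z : OnePoint ℝ} (hz : IsCuspidal q z) :
    IsCuspidal q (mob g z) := by
  obtain ⟨h, hh, rfl⟩ := hz
  exact ⟨g * h, mul_mem hg hh, mob_mul g h ∞⟩

lemma isCuspidal_mob_iff {g : SL2} (hg : g ∈ Hecke q) {z : OnePoint ℝ} :
    IsCuspidal q (mob g z) ↔ IsCuspidal q z := by
  refine ⟨fun h => ?_, IsCuspidal.mob hg⟩
  simpa only [← mob_mul, inv_mul_cancel, mob_one] using h.mob (inv_mem hg)

lemma isCuspidal_zero : IsCuspidal q (0 : ℝ) :=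
  ⟨Smat, Smat_mem_hecke q, by rw [mob_infty_of_ne _ (by simp [Smat])]; simp [Smat]⟩

lemma isCuspidal_natCast_mul (m : ℕ) : IsCuspidal q (m * (2 * cos (π / q)) : ℝ) := by
  rw [← isCuspidal_mob_iff (inv_mem (pow_mem (Tmat_mem_hecke q) m)), mob_Tmat_pow_inv_coe,
    sub_self]
  exact isCuspidal_zero

end Cusps

def heckeSin (q k : ℕ) : ℝ := sin (k * (π / q))

section HeckeSin

variable {q : ℕ}

lemma natCast_mul_pi_div_le {k : ℕ} (hk : k ≤ q) : (k : ℝ) * (π / q) ≤ π := by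
  rcases Nat.eq_zero_or_pos q with rfl | hq
  · simp [pi_nonneg]
  calc (k : ℝ) * (π / q) = π * (k / q) := by ring
    _ ≤ π * 1 := by gcongr; exact div_le_one_of_le₀ (by exact_mod_cast hk) (by positivity)
    _ = π := mul_one π

lemma heckeSin_zero : heckeSin q 0 = 0 := by simp [heckeSin]

lemma heckeSin_self : heckeSin q q = 0 := by
  rcases eq_or_ne (q : ℝ) 0 with h | h <;> simp [heckeSin, h, mul_div_cancel₀]

lemma heckeSin_add_two (k : ℕ) :
    heckeSin q (k + 2) = 2 * cos (π / q) * heckeSin q (k + 1) - heckeSin q k := by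
  have h₁ : ((k + 2 : ℕ) : ℝ) * (π / q) = (k + 1 : ℕ) * (π / q) + π / q := by push_cast; ring
  have h₂ : (k : ℝ) * (π / q) = (k + 1 : ℕ) * (π / q) - π / q := by push_cast; ring
  rw [heckeSin, heckeSin, heckeSin, h₁, h₂, sin_add, sin_sub]
  ring

lemma heckeSin_two : heckeSin q 2 = 2 * cos (π / q) * heckeSin q 1 := by
  simpa [heckeSin_zero] using heckeSin_add_two (q := q) 0

lemma heckeSin_nonneg {k : ℕ} (hk : k ≤ q) : 0 ≤ heckeSin q k :=
  sin_nonneg_of_nonneg_of_le_pi (by positivity) (natCast_mul_pi_div_le hk)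

lemma heckeSin_one_pos (hq : 2 ≤ q) : 0 < heckeSin q 1 := by
  have hq' : (2 : ℝ) ≤ q := by exact_mod_cast hq
  rw [heckeSin, Nat.cast_one, one_mul]
  refine sin_pos_of_pos_of_lt_pi (by positivity) ?_
  rw [div_lt_iff₀ (by positivity)]
  nlinarith [pi_pos]

lemma heckeSin_one_le {k : ℕ} (hk : 1 ≤ k) (hkq : k < q) : heckeSin q 1 ≤ heckeSin q k := by
  have hk' : (1 : ℝ) ≤ k := by exact_mod_cast hk
  have hθ : 0 ≤ π / q := by positivity
  have hkθ := natCast_mul_pi_div_le (Nat.succ_le_of_lt hkq)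
  push_cast at hkθ
  rw [← sub_nonneg, heckeSin, heckeSin, sin_sub_sin, Nat.cast_one, one_mul]
  refine mul_nonneg (mul_nonneg two_pos.le (sin_nonneg_of_nonneg_of_le_pi ?_ ?_))
    (cos_nonneg_of_mem_Icc ⟨?_, ?_⟩) <;> nlinarith [pi_pos]

lemma heckeSin_pos {k : ℕ} (hk : 1 ≤ k) (hkq : k < q) : 0 < heckeSin q k :=
  (heckeSin_one_pos (by omega)).trans_le (heckeSin_one_le hk hkq)

lemma two_mul_cos_pi_div_pos (hq : 3 ≤ q) : 0 < 2 * cos (π / q) := by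
  have hq' : (3 : ℝ) ≤ q := by exact_mod_cast hq
  refine mul_pos two_pos (cos_pos_of_mem_Ioo ⟨?_, ?_⟩)
  · linarith [show 0 < π / q by positivity, pi_pos]
  · rw [div_lt_div_iff₀ (by positivity) two_pos]
    nlinarith [pi_pos]

lemma coe_Nmat (hq : 2 ≤ q) (j : ℕ) :
    (Nmat q j).1 = !![heckeSin q (j + 1) / heckeSin q 1, heckeSin q (j + 2) / heckeSin q 1;
      heckeSin q j / heckeSin q 1, heckeSin q (j + 1) / heckeSin q 1] := by
  have h₁ := (heckeSin_one_pos hq).ne'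
  induction j with
  | zero =>
    rw [Nmat, pow_zero, one_mul, Tmat, heckeSin_two, heckeSin_zero]
    simp [h₁]
  | succ j ih =>
    rw [Nmat, pow_succ', mul_assoc, coe_mul, ← Nmat, ih, coe_Umat, Matrix.mul_fin_two,
      heckeSin_add_two (j + 1), heckeSin_add_two j]
    ext i k
    fin_cases i <;> fin_cases k <;>
      dsimp only [Fin.zero_eta, Fin.mk_one, Matrix.of_apply, Matrix.cons_val_zero,
        Matrix.cons_val_one] <;> ring

lemma isCuspidal_heckeSin_div {k : ℕ} (hk : 1 ≤ k) (hkq : k < q) :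
    IsCuspidal q (heckeSin q (k + 1) / heckeSin q k : ℝ) := by
  have h₁ := heckeSin_one_pos (q := q) (by omega)
  refine ⟨Nmat q k, Nmat_mem_hecke q k, ?_⟩
  rw [mob_infty_of_ne _ (by simp [coe_Nmat (by omega : 2 ≤ q), (heckeSin_pos hk hkq).ne',
    h₁.ne']), coe_Nmat (by omega)]
  simp [div_div_div_cancel_right₀ h₁.ne']

end HeckeSin

def HasNonnegEntries (g : SL2) : Prop := ∀ i j, 0 ≤ g.1 i j

lemma HasNonnegEntries.mul {g h : SL2} (hg : HasNonnegEntries g) (hh : HasNonnegEntries h) :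
    HasNonnegEntries (g * h) := fun i j => by
  rw [SL2.mul_apply]
  exact add_nonneg (mul_nonneg (hg i 0) (hh 0 j)) (mul_nonneg (hg i 1) (hh 1 j))

lemma hasNonnegEntries_iff (g : SL2) : HasNonnegEntries g ↔
    0 ≤ g.1 0 0 ∧ 0 ≤ g.1 0 1 ∧ 0 ≤ g.1 1 0 ∧ 0 ≤ g.1 1 1 := by
  simp only [HasNonnegEntries, Fin.forall_fin_two, and_assoc]

lemma hasNonnegEntries_one : HasNonnegEntries 1 := by
  simp [hasNonnegEntries_iff]

lemma exists_heckeSin_digit {q : ℕ} (hq : 3 ≤ q) {t : ℝ} (ht : 0 < t)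
    (htq : t < 2 * cos (π / q)) (htc : ¬IsCuspidal q t) :
    ∃ j, 1 ≤ j ∧ j + 2 ≤ q ∧ heckeSin q (j + 2) < t * heckeSin q (j + 1) ∧
      t * heckeSin q j < heckeSin q (j + 1) := by
  classical
  let P k := t * heckeSin q k < heckeSin q (k + 1)
  have hP₁ : P 1 := by
    show t * heckeSin q 1 < heckeSin q 2
    rw [heckeSin_two]
    nlinarith [heckeSin_one_pos (q := q) (by omega)]
  set j := Nat.findGreatest P (q - 2)
  have hj₁ : 1 ≤ j := Nat.le_findGreatest (by omega) hP₁
  have hjq : j ≤ q - 2 := Nat.findGreatest_le _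
  refine ⟨j, hj₁, by omega, ?_, Nat.findGreatest_spec (by omega) hP₁⟩
  rcases (show j + 2 = q ∨ j + 1 ≤ q - 2 by omega) with hjq' | hjq'
  · rw [hjq', heckeSin_self]
    exact mul_pos ht (heckeSin_pos (by omega) (by omega))
  · have hpos := heckeSin_pos (q := q) (k := j + 1) (by omega) (by omega)
    have hle : heckeSin q (j + 2) ≤ t * heckeSin q (j + 1) :=
      not_lt.1 (Nat.findGreatest_is_greatest (P := P) (k := j + 1) (by omega) hjq')
    refine hle.lt_of_ne fun h => htc ?_
    rw [show t = heckeSin q (j + 2) / heckeSin q (j + 1) by field_simp; linarith]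
    exact isCuspidal_heckeSin_div (by omega) (by omega)

lemma exists_reduction_step_of_lt {q : ℕ} (hq : 3 ≤ q) {t : ℝ} (ht : 0 < t)
    (htq : t < 2 * cos (π / q)) (htc : ¬IsCuspidal q t) :
    ∃ h ∈ Hecke q, HasNonnegEntries h ∧ 1 ≤ h.1 0 0 ∧ 1 ≤ h.1 1 0 ∧ 1 ≤ h.1 1 1 ∧
      ∃ u : ℝ, 0 < u ∧ mob h⁻¹ t = u := by
  obtain ⟨j, hj₁, hjq, hlo, hhi⟩ := exists_heckeSin_digit hq ht htq htc
  have h₁ := heckeSin_one_pos (q := q) (by omega)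
  have hs₀ := heckeSin_one_le (q := q) hj₁ (by omega)
  have hs₁ := heckeSin_one_le (q := q) (k := j + 1) (by omega) (by omega)
  have hN := coe_Nmat (q := q) (by omega) j
  have hs : ∀ k ≤ q, 0 ≤ heckeSin q k / heckeSin q 1 :=
    fun k hk => div_nonneg (heckeSin_nonneg hk) h₁.le
  refine ⟨Nmat q j, Nmat_mem_hecke q j, (hasNonnegEntries_iff _).2 ?_, ?_, ?_, ?_,
    exists_pos_mob_inv_eq _ ?_ ?_⟩ <;> rw [hN]
  · exact ⟨hs _ (by omega), hs _ hjq, hs _ (by omega), hs _ (by omega)⟩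
  · exact (one_le_div h₁).2 hs₁
  · exact (one_le_div h₁).2 hs₀
  · exact (one_le_div h₁).2 hs₁
  · change 0 < heckeSin q (j + 1) / heckeSin q 1 * t - heckeSin q (j + 2) / heckeSin q 1
    rw [div_mul_eq_mul_div, ← sub_div]
    exact div_pos (by linarith) h₁
  · change 0 < heckeSin q (j + 1) / heckeSin q 1 - heckeSin q j / heckeSin q 1 * t
    rw [div_mul_eq_mul_div, ← sub_div]
    exact div_pos (by linarith) h₁

lemma exists_sub_natCast_mul_pos_lt {q : ℕ} (hq : 3 ≤ q) {t : ℝ} (ht : 0 < t)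
    (htc : ¬IsCuspidal q t) :
    ∃ m : ℕ, 0 < t - m * (2 * cos (π / q)) ∧ t - m * (2 * cos (π / q)) < 2 * cos (π / q) := by
  have hl := two_mul_cos_pi_div_pos hq
  refine ⟨⌊t / (2 * cos (π / q))⌋₊, lt_of_le_of_ne ?_ fun h => htc ?_, ?_⟩
  · have := Nat.floor_le (div_nonneg ht.le hl.le)
    rw [le_div_iff₀ hl] at this
    linarith
  · rw [sub_eq_zero.1 h.symm]
    exact isCuspidal_natCast_mul _
  · have := Nat.lt_floor_add_one (t / (2 * cos (π / q)))
    rw [div_lt_iff₀ hl] at this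
    linarith

lemma exists_reduction_step {q : ℕ} (hq : 3 ≤ q) {t : ℝ} (ht : 0 < t) (htc : ¬IsCuspidal q t) :
    ∃ h ∈ Hecke q, HasNonnegEntries h ∧ 1 ≤ h.1 0 0 ∧ 1 ≤ h.1 1 0 ∧ 1 ≤ h.1 1 1 ∧
      ∃ u : ℝ, 0 < u ∧ mob h⁻¹ t = u := by
  obtain ⟨m, hm₀, hm₁⟩ := exists_sub_natCast_mul_pos_lt hq ht htc
  have hTm := pow_mem (Tmat_mem_hecke q) m
  have hc : ¬IsCuspidal q (t - m * (2 * cos (π / q)) : ℝ) := by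
    rwa [← mob_Tmat_pow_inv_coe, isCuspidal_mob_iff (inv_mem hTm)]
  obtain ⟨h, hh, hnn, h₀₀, h₁₀, h₁₁, u, hu, hhu⟩ := exists_reduction_step_of_lt hq hm₀ hm₁ hc
  have hml : 0 ≤ m * (2 * cos (π / q)) := by positivity [two_mul_cos_pi_div_pos hq]
  have hcoe := coe_Tmat_pow_mul q m h
  rw [hasNonnegEntries_iff] at hnn
  refine ⟨Tmat q ^ m * h, mul_mem hTm hh, ?_, ?_, ?_, ?_, u, hu, ?_⟩
  · rw [hasNonnegEntries_iff, hcoe]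
    exact ⟨add_nonneg hnn.1 (mul_nonneg hml hnn.2.2.1), add_nonneg hnn.2.1
      (mul_nonneg hml hnn.2.2.2), hnn.2.2.1, hnn.2.2.2⟩
  · rw [hcoe]
    exact le_add_of_le_of_nonneg h₀₀ (mul_nonneg hml hnn.2.2.1)
  · rwa [hcoe]
  · rwa [hcoe]
  · rw [mul_inv_rev, mob_mul, mob_Tmat_pow_inv_coe, hhu]

lemma exists_iterated_reduction {q : ℕ} (hq : 3 ≤ q) {x : ℝ} (hx : 0 < x)
    (hxc : ¬IsCuspidal q x) (n : ℕ) :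
    ∃ g ∈ Hecke q, HasNonnegEntries g ∧ (n : ℝ) ≤ g.1 1 0 ∧ 1 ≤ g.1 1 1 ∧
      ∃ t : ℝ, 0 < t ∧ mob g⁻¹ x = t := by
  induction n with
  | zero => exact ⟨1, one_mem _, hasNonnegEntries_one, by simp, by simp, x, hx, by simp [mob_one]⟩
  | succ n ih =>
    obtain ⟨g, hg, hgn, hC, hD, t, ht, hgt⟩ := ih
    have htc : ¬IsCuspidal q t := by rwa [← hgt, isCuspidal_mob_iff (inv_mem hg)]
    obtain ⟨h, hh, hhn, h₀₀, h₁₀, h₁₁, u, hu, hhu⟩ := exists_reduction_step hq ht htc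
    refine ⟨g * h, mul_mem hg hh, hgn.mul hhn, ?_, ?_, u, hu, ?_⟩
    · rw [SL2.mul_apply]
      push_cast
      nlinarith [hgn 1 0]
    · rw [SL2.mul_apply]
      nlinarith [hgn 1 0, hhn 0 1]
    · rw [mul_inv_rev, mob_mul, hgt, hhu]

lemma exists_mob_inv_neg_of_far {g : SL2} (hg : HasNonnegEntries g) {x y t : ℝ} (ht : 0 < t)
    (hxt : mob g⁻¹ x = t) (hxy : 1 < g.1 1 0 * g.1 1 1 * |x - y|) :
    ∃ b : ℝ, b < 0 ∧ mob g⁻¹ y = b := by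
  have hdet := SL2.det_eq g
  have hC : 0 < g.1 1 0 :=
    (hg 1 0).lt_of_ne fun h => by rw [← h, zero_mul, zero_mul] at hxy; linarith
  have hD : 0 < g.1 1 1 :=
    (hg 1 1).lt_of_ne fun h => by rw [← h, mul_zero, zero_mul] at hxy; linarith
  have he : 0 < g.1 1 0 * t + g.1 1 1 := by nlinarith
  rw [mob_inv_eq_iff, mob_coe_of_ne g he.ne', OnePoint.coe_eq_coe, div_eq_iff he.ne'] at hxt
  set e := g.1 1 0 * t + g.1 1 1
  have hnum : (g.1 1 1 * y - g.1 0 1) * e = t + g.1 1 1 * (y - x) * e := by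
    linear_combination (-(g.1 1 1)) * hxt + t * hdet
  have hden : (g.1 0 0 - g.1 1 0 * y) * e = 1 - g.1 1 0 * (y - x) * e := by
    linear_combination g.1 1 0 * hxt + hdet
  rcases lt_or_gt_of_ne (show x ≠ y by rintro rfl; norm_num at hxy) with hlt | hgt
  · rw [abs_of_neg (sub_neg.2 hlt), neg_sub] at hxy
    have hfar : 1 < g.1 1 0 * (y - x) * e := by
      nlinarith [mul_nonneg (mul_nonneg hC.le (sub_pos.2 hlt).le) (mul_nonneg hC.le ht.le)]
    have hden' : g.1 0 0 - g.1 1 0 * y < 0 := by nlinarith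
    refine ⟨_, div_neg_of_pos_of_neg ?_ hden', mob_inv_coe_of_ne g hden'.ne⟩
    nlinarith [mul_pos (mul_pos hD (sub_pos.2 hlt)) he]
  · rw [abs_of_pos (sub_pos.2 hgt)] at hxy
    have hfar : t < g.1 1 1 * (x - y) * e := by
      nlinarith [mul_lt_mul_of_pos_left hxy ht,
        mul_nonneg (mul_nonneg hD.le hD.le) (sub_pos.2 hgt).le]
    have hden' : 0 < g.1 0 0 - g.1 1 0 * y := by
      nlinarith [mul_pos (mul_pos hC (sub_pos.2 hgt)) he]
    refine ⟨_, div_neg_of_neg_of_pos ?_ hden', mob_inv_coe_of_ne g hden'.ne'⟩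
    nlinarith

lemma exists_separating_of_pos {q : ℕ} (hq : 3 ≤ q) {x y : ℝ} (hx : 0 < x)
    (hxc : ¬IsCuspidal q x) (hxy : x ≠ y) :
    ∃ g ∈ Hecke q, ∃ a b c : ℝ, mob g⁻¹ x = a ∧ mob g⁻¹ y = b ∧ 0 < a ∧ b < 0 ∧
      mob g (0 : ℝ) = c ∧ 0 ≤ c := by
  have hd : 0 < |x - y| := abs_pos.2 (sub_ne_zero.2 hxy)
  obtain ⟨n, hn⟩ := exists_nat_gt (1 / |x - y|)
  obtain ⟨g, hg, hgn, hC, hD, a, ha, hga⟩ := exists_iterated_reduction hq hx hxc n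
  have hCD : (n : ℝ) ≤ g.1 1 0 * g.1 1 1 := by nlinarith [hgn 1 0]
  have hfar : 1 < g.1 1 0 * g.1 1 1 * |x - y| :=
    calc 1 < n * |x - y| := by rwa [div_lt_iff₀ hd] at hn
      _ ≤ g.1 1 0 * g.1 1 1 * |x - y| := by gcongr
  obtain ⟨b, hb, hgb⟩ := exists_mob_inv_neg_of_far hgn ha hga hfar
  have hD₀ : g.1 1 0 * 0 + g.1 1 1 ≠ 0 := by linarith
  exact ⟨g, hg, a, b, _, hga, hgb, ha, hb, mob_coe_of_ne g hD₀,
    div_nonneg (by simpa using hgn 0 1) (by linarith)⟩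

lemma exists_separating {q : ℕ} (hq : 3 ≤ q) {x y : ℝ} (hx : x ≠ 0) (hy : y ≠ 0)
    (hxc : ¬IsCuspidal q x) (hxy : x ≠ y) :
    ∃ g ∈ Hecke q, ∃ a b : ℝ, mob g⁻¹ x = a ∧ mob g⁻¹ y = b ∧ 0 < a ∧ b < 0 := by
  rcases hx.lt_or_gt with hneg | hpos
  · have hS := Smat_mem_hecke q
    have hx' : 0 < -1 / x := div_pos_of_neg_of_neg (by norm_num) hneg
    have hxc' : ¬IsCuspidal q (-1 / x : ℝ) := by
      rwa [← mob_Smat_inv_coe hx, isCuspidal_mob_iff (inv_mem hS)]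
    have hxy' : -1 / x ≠ -1 / y := by simpa [neg_div] using hxy
    obtain ⟨g, hg, a, b, -, hga, hgb, ha, hb, -⟩ := exists_separating_of_pos hq hx' hxc' hxy'
    refine ⟨Smat * g, mul_mem hS hg, a, b, ?_, ?_, ha, hb⟩
    · rw [mul_inv_rev, mob_mul, mob_Smat_inv_coe hx, hga]
    · rw [mul_inv_rev, mob_mul, mob_Smat_inv_coe hy, hgb]
  · obtain ⟨g, hg, a, b, -, hga, hgb, ha, hb, -⟩ := exists_separating_of_pos hq hpos hxc hxy
    exact ⟨g, hg, a, b, hga, hgb, ha, hb⟩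

/-- for distinct non-cuspidal points `x, y ∈ ℝ ∪ {∞}` of `Γ_q` there is
`g ∈ Γ_q` with `g⁻¹ • x > 0 > g⁻¹ • y` (both real); moreover if `x` is a positive real
number then `g` can be chosen with `g • 0` a nonnegative real number as well. -/
theorem stmt_13 (q : ℕ) (hq : 3 ≤ q) (x y : OnePoint ℝ) (hxy : x ≠ y)
    (hx : ¬∃ g ∈ Hecke q, mob g ∞ = x) (hy : ¬∃ g ∈ Hecke q, mob g ∞ = y) :
    (∃ g ∈ Hecke q, ∃ a b : ℝ,
      mob g⁻¹ x = (a : OnePoint ℝ) ∧ mob g⁻¹ y = (b : OnePoint ℝ) ∧ a > 0 ∧ 0 > b) ∧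
    (∀ r : ℝ, x = (r : OnePoint ℝ) → 0 < r →
      ∃ g ∈ Hecke q, ∃ a b c : ℝ,
        mob g⁻¹ x = (a : OnePoint ℝ) ∧ mob g⁻¹ y = (b : OnePoint ℝ) ∧ a > 0 ∧ 0 > b ∧
        mob g ((0 : ℝ) : OnePoint ℝ) = (c : OnePoint ℝ) ∧ 0 ≤ c) := by
  lift x to ℝ using by rintro rfl; exact hx isCuspidal_infty
  lift y to ℝ using by rintro rfl; exact hy isCuspidal_infty
  have hx₀ : x ≠ 0 := by rintro rfl; exact hx isCuspidal_zero
  have hy₀ : y ≠ 0 := by rintro rfl; exact hy isCuspidal_zero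
  have hxy' : x ≠ y := by rintro rfl; exact hxy rfl
  refine ⟨exists_separating hq hx₀ hy₀ hx hxy', fun r hr hr₀ => ?_⟩
  obtain rfl := OnePoint.coe_injective hr
  exact exists_separating_of_pos hq hr₀ hx hxy'
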